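/- Let A be a cDFA over alphabet Σ with state set Q, start state q0 and transition function δ, and let D₁,…,Dₙ ⊆ Σ be nonempty finite domains. For every i ∈ [1,n] and ℓ ∈ Dᵢ, the minimum of cost(q0,σ) over all domain-consistent strings σ of length n with σᵢ = ℓ equals the minimum over all q ∈ Q of preMin(i−1,q) + inc + sufMin(i+1,q′), where δ(q,ℓ) = (q′,inc). -/

import Mathlib

/-- A counter-DFA over state type `Q` and alphabet `σ`: a start state and a total
transition function returning the successor state and the counter increment. -/
structure CDFA (Q : Type*) (σ : Type*) where
  q0 : Q
  δ : Q → σ → Q × ℕ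

namespace CDFA

variable {Q σ : Type*}

/-- The state reached from `q` after consuming a string. -/
def run (A : CDFA Q σ) : Q → List σ → Q
  | q, [] => q
  | q, ℓ :: w => A.run (A.δ q ℓ).1 w

/-- The total counter increase from state `q` upon consuming a string. -/
def cost (A : CDFA Q σ) : Q → List σ → ℕ
  | _, [] => 0
  | q, ℓ :: w => (A.δ q ℓ).2 + A.cost (A.δ q ℓ).1 w

end CDFA

namespace CDFA

variable {Q σ : Type*}

/-- `preMin A D i hi q` : the minimum cost (in `ℕ ∪ {∞}`) of a domain-consistent
prefix string of length `i` leading from the start state to state `q`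
(`∞` if no such string reaches `q`). -/
noncomputable def preMin (A : CDFA Q σ) {n : ℕ} (D : Fin n → Finset σ)
    (i : ℕ) (hi : i ≤ n) (q : Q) : ℕ∞ :=
  sInf {c : ℕ∞ | ∃ s : Fin i → σ, (∀ j, s j ∈ D (Fin.castLE hi j)) ∧
    A.run A.q0 (List.ofFn s) = q ∧ (A.cost A.q0 (List.ofFn s) : ℕ∞) = c}

/-- `preMax A D i hi q` : the maximum cost (in `ℕ ∪ {−∞}`) of a domain-consistent
prefix string of length `i` leading from the start state to state `q`
(`−∞` if no such string reaches `q`). -/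
noncomputable def preMax (A : CDFA Q σ) {n : ℕ} (D : Fin n → Finset σ)
    (i : ℕ) (hi : i ≤ n) (q : Q) : WithBot ℕ :=
  sSup {c : WithBot ℕ | ∃ s : Fin i → σ, (∀ j, s j ∈ D (Fin.castLE hi j)) ∧
    A.run A.q0 (List.ofFn s) = q ∧ (A.cost A.q0 (List.ofFn s) : WithBot ℕ) = c}

/-- `sufMin A D i q` : the minimum cost of a domain-consistent suffix string for
positions `i, …, n−1` (0-based), starting from state `q`. -/
noncomputable def sufMin (A : CDFA Q σ) {n : ℕ} (D : Fin n → Finset σ)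
    (i : ℕ) (q : Q) : ℕ :=
  sInf {c : ℕ | ∃ s : Fin (n - i) → σ,
    (∀ j : Fin (n - i), s j ∈ D ⟨i + j.val, by have := j.isLt; omega⟩) ∧
    A.cost q (List.ofFn s) = c}

/-- `sufMax A D i q` : the maximum cost of a domain-consistent suffix string for
positions `i, …, n−1` (0-based), starting from state `q`. -/
noncomputable def sufMax (A : CDFA Q σ) {n : ℕ} (D : Fin n → Finset σ)
    (i : ℕ) (q : Q) : ℕ :=
  sSup {c : ℕ | ∃ s : Fin (n - i) → σ,
    (∀ j : Fin (n - i), s j ∈ D ⟨i + j.val, by have := j.isLt; omega⟩) ∧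
    A.cost q (List.ofFn s) = c}

end CDFA

/-!
Cutting a string with `σᵢ = ℓ` at position `i` writes it as `p ++ ℓ :: t`, and its cost splits
as `cost(q0, p) + inc + cost(q', t)`, where `q` is the state reached by `p` and
`δ(q, ℓ) = (q', inc)`. The constraints on `p` and on `t` are independent, so for each `q` any
optimal prefix reaching `q` can be spliced with any optimal suffix from `q'`; minimising over `q`
gives the formula.
-/

namespace Fin

variable {α : Type*} {n : ℕ}

def suffixAfter (i : Fin n) (s : Fin n → α) : Fin (n - (i.val + 1)) → α :=
  fun j => s ⟨i.val + 1 + j.val, by omega⟩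

def splice (i : Fin n) (p : Fin i.val → α) (a : α) (t : Fin (n - (i.val + 1)) → α) :
    Fin n → α := fun j =>
  if h : j.val < i.val then p ⟨j.val, h⟩
  else if _ : j.val = i.val then a
  else t ⟨j.val - (i.val + 1), by omega⟩

theorem ofFn_eq_take_append_cons_suffixAfter (s : Fin n → α) (i : Fin n) :
    List.ofFn s = List.ofFn (take i.val i.isLt.le s) ++ s i :: List.ofFn (suffixAfter i s) := by
  have hdrop : (List.ofFn s).drop (i.val + 1) = List.ofFn (suffixAfter i s) :=
    List.ext_getElem (by simp) fun k _ _ => by simp [suffixAfter, Nat.add_comm]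
  conv_lhs => rw [← List.take_append_drop i.val (List.ofFn s)]
  rw [List.drop_eq_getElem_cons (by simp), hdrop, ofFn_take_eq_take_ofFn]
  simp

@[simp]
theorem splice_self (i : Fin n) (p : Fin i.val → α) (a : α) (t : Fin (n - (i.val + 1)) → α) :
    splice i p a t i = a := by
  simp [splice]

@[simp]
theorem take_splice (i : Fin n) (p : Fin i.val → α) (a : α) (t : Fin (n - (i.val + 1)) → α) :
    take i.val i.isLt.le (splice i p a t) = p := by
  funext j
  simp [splice, j.isLt]

@[simp]
theorem suffixAfter_splice (i : Fin n) (p : Fin i.val → α) (a : α)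
    (t : Fin (n - (i.val + 1)) → α) : suffixAfter i (splice i p a t) = t := by
  funext j
  have hlt : ¬ i.val + 1 + j.val < i.val := by omega
  have hne : i.val + 1 + j.val ≠ i.val := by omega
  simp [suffixAfter, splice, hlt, hne]

theorem splice_mem {D : Fin n → Set α} (i : Fin n) {p : Fin i.val → α} {a : α}
    {t : Fin (n - (i.val + 1)) → α} (hp : ∀ j, p j ∈ D (castLE i.isLt.le j)) (ha : a ∈ D i)
    (ht : ∀ j, t j ∈ D ⟨i.val + 1 + j.val, by omega⟩) (j : Fin n) :
    splice i p a t j ∈ D j := by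
  rcases lt_trichotomy j.val i.val with hlt | heq | hgt
  · simpa [splice, hlt] using hp ⟨j.val, hlt⟩
  · simpa [splice, heq, Fin.ext heq] using ha
  · have hj : (⟨i.val + 1 + (j.val - (i.val + 1)), by omega⟩ : Fin n) = j := by
      ext; simp; omega
    simpa [splice, hgt.not_gt, hgt.ne', hj] using ht ⟨j.val - (i.val + 1), by omega⟩

end Fin

namespace CDFA

variable {Q σ : Type*} (A : CDFA Q σ)

theorem cost_append (q : Q) (u v : List σ) :
    A.cost q (u ++ v) = A.cost q u + A.cost (A.run q u) v := by
  induction u generalizing q with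
  | nil => simp [cost, run]
  | cons ℓ u ih => simp [run, cost, ih, Nat.add_assoc]

theorem cost_append_cons (q : Q) (u : List σ) (ℓ : σ) (v : List σ) :
    A.cost q (u ++ ℓ :: v) =
      A.cost q u + (A.δ (A.run q u) ℓ).2 + A.cost (A.δ (A.run q u) ℓ).1 v := by
  rw [cost_append, cost, Nat.add_assoc]

variable {n : ℕ} (D : Fin n → Finset σ)

def costsWithSymbolAt (i : Fin n) (ℓ : σ) : Set ℕ :=
  {c | ∃ s : Fin n → σ, (∀ j, s j ∈ D j) ∧ s i = ℓ ∧ A.cost A.q0 (List.ofFn s) = c}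

theorem costsWithSymbolAt_nonempty (hD : ∀ j, (D j).Nonempty) (i : Fin n) {ℓ : σ}
    (hℓ : ℓ ∈ D i) : (A.costsWithSymbolAt D i ℓ).Nonempty :=
  ⟨_, _, Fin.splice_mem (D := fun j => (D j : Set σ)) i (fun _ => (hD _).choose_spec) hℓ
    (fun _ => (hD _).choose_spec), Fin.splice_self .., rfl⟩

theorem sInf_costsWithSymbolAt_le_cost (i : Fin n) {ℓ : σ} {s : Fin n → σ}
    (hs : ∀ j, s j ∈ D j) (hsi : s i = ℓ) :
    sInf (A.costsWithSymbolAt D i ℓ) ≤ A.cost A.q0 (List.ofFn s) :=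
  Nat.sInf_le ⟨s, hs, hsi, rfl⟩

theorem cost_ofFn_eq_take_add_suffixAfter (q : Q) (s : Fin n → σ) (i : Fin n) :
    let r := A.run q (List.ofFn (Fin.take i.val i.isLt.le s))
    A.cost q (List.ofFn s) = A.cost q (List.ofFn (Fin.take i.val i.isLt.le s)) +
      (A.δ r (s i)).2 + A.cost (A.δ r (s i)).1 (List.ofFn (Fin.suffixAfter i s)) := by
  rw [Fin.ofFn_eq_take_append_cons_suffixAfter s i, cost_append_cons]

theorem preMin_le_cost {i : ℕ} (hi : i ≤ n) {p : Fin i → σ}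
    (hp : ∀ j, p j ∈ D (Fin.castLE hi j)) :
    A.preMin D i hi (A.run A.q0 (List.ofFn p)) ≤ A.cost A.q0 (List.ofFn p) :=
  sInf_le ⟨p, hp, rfl, rfl⟩

theorem exists_cost_eq_preMin {i : ℕ} (hi : i ≤ n) {q : Q} (h : A.preMin D i hi q ≠ ⊤) :
    ∃ p : Fin i → σ, (∀ j, p j ∈ D (Fin.castLE hi j)) ∧ A.run A.q0 (List.ofFn p) = q ∧
      (A.cost A.q0 (List.ofFn p) : ℕ∞) = A.preMin D i hi q := by
  have hne : {c : ℕ∞ | ∃ p : Fin i → σ, (∀ j, p j ∈ D (Fin.castLE hi j)) ∧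
      A.run A.q0 (List.ofFn p) = q ∧ (A.cost A.q0 (List.ofFn p) : ℕ∞) = c}.Nonempty :=
    Set.nonempty_iff_ne_empty.mpr fun hempty => h (by rw [preMin, hempty, sInf_empty])
  exact csInf_mem hne

theorem sufMin_le_cost (i : ℕ) (q : Q) {t : Fin (n - i) → σ}
    (ht : ∀ j : Fin (n - i), t j ∈ D ⟨i + j.val, by omega⟩) :
    A.sufMin D i q ≤ A.cost q (List.ofFn t) := by
  unfold sufMin
  apply Nat.sInf_le
  exact ⟨t, ht, rfl⟩

theorem exists_cost_eq_sufMin (hD : ∀ j, (D j).Nonempty) (i : ℕ) (q : Q) :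
    ∃ t : Fin (n - i) → σ, (∀ j : Fin (n - i), t j ∈ D ⟨i + j.val, by omega⟩) ∧
      A.cost q (List.ofFn t) = A.sufMin D i q := by
  have hne : {c : ℕ | ∃ t : Fin (n - i) → σ,
      (∀ j : Fin (n - i), t j ∈ D ⟨i + j.val, by omega⟩) ∧
        A.cost q (List.ofFn t) = c}.Nonempty :=
    ⟨_, fun _ => (hD _).choose, fun _ => (hD _).choose_spec, rfl⟩
  exact Nat.sInf_mem hne

theorem sInf_costsWithSymbolAt_le_preMin_add_sufMin (hD : ∀ j, (D j).Nonempty) (i : Fin n)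
    {ℓ : σ} (hℓ : ℓ ∈ D i) (q : Q) :
    ((sInf (A.costsWithSymbolAt D i ℓ) : ℕ) : ℕ∞) ≤
      A.preMin D i.val i.isLt.le q + ((A.δ q ℓ).2 : ℕ∞) +
        (A.sufMin D (i.val + 1) (A.δ q ℓ).1 : ℕ∞) := by
  by_cases htop : A.preMin D i.val i.isLt.le q = ⊤
  · simp [htop]
  obtain ⟨p, hp, rfl, hpcost⟩ := A.exists_cost_eq_preMin D i.isLt.le htop
  obtain ⟨t, ht, htcost⟩ := A.exists_cost_eq_sufMin D hD (i.val + 1) (A.δ _ ℓ).1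
  have hs : ∀ j, Fin.splice i p ℓ t j ∈ D j :=
    Fin.splice_mem (D := fun j => (D j : Set σ)) i hp hℓ ht
  have hcost := A.cost_ofFn_eq_take_add_suffixAfter A.q0 (Fin.splice i p ℓ t) i
  simp only [Fin.take_splice, Fin.splice_self, Fin.suffixAfter_splice] at hcost
  rw [← hpcost, ← htcost]
  exact_mod_cast (A.sInf_costsWithSymbolAt_le_cost D i hs (Fin.splice_self ..)).trans_eq hcost

theorem iInf_preMin_add_sufMin_le_cost (i : Fin n) {s : Fin n → σ} (hs : ∀ j, s j ∈ D j) :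
    ⨅ q : Q, A.preMin D i.val i.isLt.le q + ((A.δ q (s i)).2 : ℕ∞) +
        (A.sufMin D (i.val + 1) (A.δ q (s i)).1 : ℕ∞) ≤ A.cost A.q0 (List.ofFn s) := by
  refine (iInf_le _ (A.run A.q0 (List.ofFn (Fin.take i.val i.isLt.le s)))).trans ?_
  rw [A.cost_ofFn_eq_take_add_suffixAfter A.q0 s i]
  push_cast
  gcongr
  · exact A.preMin_le_cost D i.isLt.le fun _ => hs _
  · exact_mod_cast A.sufMin_le_cost D (i.val + 1) _ fun _ => hs _

end CDFA

theorem min_cost_eq_iInf_preMin_add_sufMin_general {Q σ : Type*}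
    (A : CDFA Q σ) {n : ℕ} (D : Fin n → Finset σ) (hD : ∀ j, (D j).Nonempty)
    (i : Fin n) (ℓ : σ) (hℓ : ℓ ∈ D i) :
    ((sInf {c : ℕ | ∃ s : Fin n → σ, (∀ j, s j ∈ D j) ∧ s i = ℓ ∧
        A.cost A.q0 (List.ofFn s) = c} : ℕ) : ℕ∞) =
      ⨅ q : Q, A.preMin D i.val i.isLt.le q + ((A.δ q ℓ).2 : ℕ∞) +
        (A.sufMin D (i.val + 1) (A.δ q ℓ).1 : ℕ∞) := by
  change ((sInf (A.costsWithSymbolAt D i ℓ) : ℕ) : ℕ∞) = _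
  refine le_antisymm (le_iInf (A.sInf_costsWithSymbolAt_le_preMin_add_sufMin D hD i hℓ)) ?_
  obtain ⟨s, hs, rfl, hcost⟩ := Nat.sInf_mem (A.costsWithSymbolAt_nonempty D hD i hℓ)
  exact hcost ▸ A.iInf_preMin_add_sufMin_le_cost D i hs

/-- The minimum cost over all domain-consistent strings of length `n` whose `i`-th
symbol is `ℓ` equals `min_{q ∈ Q} (preMin(i−1,q) + inc + sufMin(i+1,q′))` where
`δ(q,ℓ) = (q′,inc)` (positions 0-based; both sides in `ℕ ∪ {∞}`). -/
theorem min_cost_eq_iInf_preMin_add_sufMin {Q σ : Type*} [Fintype Q] [Fintype σ]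
    (A : CDFA Q σ) {n : ℕ} (D : Fin n → Finset σ) (hD : ∀ j, (D j).Nonempty)
    (i : Fin n) (ℓ : σ) (hℓ : ℓ ∈ D i) :
    ((sInf {c : ℕ | ∃ s : Fin n → σ, (∀ j, s j ∈ D j) ∧ s i = ℓ ∧
        A.cost A.q0 (List.ofFn s) = c} : ℕ) : ℕ∞) =
      ⨅ q : Q, A.preMin D i.val i.isLt.le q + ((A.δ q ℓ).2 : ℕ∞) +
        (A.sufMin D (i.val + 1) (A.δ q ℓ).1 : ℕ∞) :=
  min_cost_eq_iInf_preMin_add_sufMin_general A D hD i ℓ hℓ
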